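/- arXiv:2102.11947 — 5 statements merged into one kernel-verified Lean document; each statement's English description precedes it below -/
import Mathlib

section
/- Let (aₙ), (βₙ), (γₙ) be sequences of nonnegative reals with ∑βₙ < ∞, ∑γₙ < ∞, and a_{n+1} ≤ (1+βₙ)aₙ + γₙ for all n. Then (aₙ) converges. -/
open Filter Topology

/-- Quasi-Fejér fact: if `(aₙ)`, `(βₙ)`, `(γₙ)` are nonnegative real sequences with
`∑ βₙ < ∞`, `∑ γₙ < ∞`, and `a_{n+1} ≤ (1 + βₙ) aₙ + γₙ` for all `n`, then `(aₙ)`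
converges. -/
theorem quasi_fejer_convergence
    (a β γ : ℕ → ℝ)
    (ha : ∀ n, 0 ≤ a n) (hβ : ∀ n, 0 ≤ β n) (hγ : ∀ n, 0 ≤ γ n)
    (hβs : Summable β) (hγs : Summable γ)
    (hrec : ∀ n, a (n + 1) ≤ (1 + β n) * a n + γ n) :
    ∃ l : ℝ, Tendsto a atTop (𝓝 l) := by
  set P : ℕ → ℝ := fun n => ∏ k ∈ Finset.range n, (1 + β k) with hPdef
  have hP1 : ∀ n, (1:ℝ) ≤ P n := by
    intro n
    show (1:ℝ) ≤ ∏ k ∈ Finset.range n, (1 + β k)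
    have h : ∏ k ∈ Finset.range n, (1:ℝ) ≤ ∏ k ∈ Finset.range n, (1 + β k) :=
      Finset.prod_le_prod (fun k _ => zero_le_one) (fun k _ => by linarith [hβ k])
    simpa using h
  have hPpos : ∀ n, (0:ℝ) < P n := fun n => lt_of_lt_of_le one_pos (hP1 n)
  have hPmono : Monotone P := by
    apply monotone_nat_of_le_succ
    intro n
    have : P (n+1) = P n * (1 + β n) := Finset.prod_range_succ _ n
    nlinarith [hPpos n, hβ n]
  have hPbdd : ∀ n, P n ≤ Real.exp (∑' k, β k) := by
    intro n
    calc P n ≤ ∏ k ∈ Finset.range n, Real.exp (β k) :=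
          Finset.prod_le_prod (fun k _ => by linarith [hβ k])
            (fun k _ => by linarith [Real.add_one_le_exp (β k)])
      _ = Real.exp (∑ k ∈ Finset.range n, β k) := by
          rw [Real.exp_sum]
      _ ≤ Real.exp (∑' k, β k) :=
          Real.exp_le_exp.mpr (Summable.sum_le_tsum _ (fun k _ => hβ k) hβs)
  obtain ⟨L, hL⟩ : ∃ L, Tendsto P atTop (𝓝 L) :=
    ⟨_, tendsto_atTop_ciSup hPmono ⟨_, fun x ⟨n, hn⟩ => hn ▸ hPbdd n⟩⟩
  have hL1 : (1:ℝ) ≤ L := ge_of_tendsto' hL hP1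
  -- normalized sequence
  set c : ℕ → ℝ := fun n => a n / P n with hcdef
  have hcrec : ∀ n, c (n+1) ≤ c n + γ n := by
    intro n
    have hPs : P (n+1) = P n * (1 + β n) := Finset.prod_range_succ _ n
    have h1 : (1:ℝ) ≤ P (n+1) := hP1 (n+1)
    have hps : 0 < P (n+1) := hPpos (n+1)
    rw [hcdef]
    simp only
    rw [div_add' _ _ _ (hPpos n).ne', div_le_div_iff₀ hps (hPpos n)]
    have : a (n+1) * P n ≤ ((1 + β n) * a n + γ n) * P n := by
      nlinarith [hPpos n, hrec n]
    calc a (n+1) * P n ≤ ((1 + β n) * a n + γ n) * P n := this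
      _ = a n * P (n+1) + γ n * P n := by rw [hPs]; ring
      _ ≤ (a n + γ n * P n) * P (n+1) := by nlinarith [mul_nonneg (mul_nonneg (hγ n) (hPpos n).le) (sub_nonneg.mpr h1)]
  -- tail sums of γ
  set T : ℕ → ℝ := fun n => ∑' k, γ (n + k) with hTdef
  have hTsum : ∀ n, Summable (fun k => γ (n + k)) := by
    intro n
    exact ((summable_nat_add_iff n).mpr hγs).congr (fun k => by rw [Nat.add_comm])
  have hTnonneg : ∀ n, 0 ≤ T n := fun n => tsum_nonneg (fun k => hγ _)
  have hTrec : ∀ n, T n = γ n + T (n+1) := by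
    intro n
    rw [hTdef]
    simp only
    rw [Summable.tsum_eq_zero_add (hTsum n), Nat.add_zero]
    congr 1
    exact tsum_congr fun k => by congr 1; omega
  have hT0 : Tendsto T atTop (𝓝 0) := by
    have := tendsto_sum_nat_add γ
    refine this.congr (fun n => tsum_congr fun k => by rw [Nat.add_comm])
  -- e is antitone and bounded below
  set e : ℕ → ℝ := fun n => c n + T n with hedef
  have heanti : Antitone e := by
    apply antitone_nat_of_succ_le
    intro n
    have := hcrec n
    have := hTrec n
    simp only [hedef]
    linarith
  have hebdd : BddBelow (Set.range e) := by
    refine ⟨0, fun x ⟨n, hn⟩ => ?_⟩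
    have : 0 ≤ c n := div_nonneg (ha n) (hPpos n).le
    have := hTnonneg n
    simp only [hedef] at hn
    linarith
  have heconv : Tendsto e atTop (𝓝 (⨅ n, e n)) := tendsto_atTop_ciInf heanti hebdd
  -- c converges
  have hcconv : Tendsto c atTop (𝓝 (⨅ n, e n)) := by
    have : Tendsto (fun n => e n - T n) atTop (𝓝 ((⨅ n, e n) - 0)) := heconv.sub hT0
    simpa using this.congr (fun n => by simp [hedef])
  -- a = c * P converges
  refine ⟨(⨅ n, e n) * L, ?_⟩
  have : Tendsto (fun n => c n * P n) atTop (𝓝 ((⨅ n, e n) * L)) := hcconv.mul hL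
  exact this.congr (fun n => by simp only [hcdef]; field_simp [hcdef, (hPpos n).ne'])
end

section
/- Let X = U Σ Vᴴ be a singular value decomposition of a complex N×N matrix X, with Σ = diag(σ₁,…,σ_N). For τ ≥ 0, the matrix Z = U D_τ(Σ) Vᴴ with D_τ(Σ) = diag(max(σᵢ−τ,0)) is the unique minimizer over Z' of τ‖Z'‖_* + (1/2)‖X − Z'‖_F², where ‖·‖_* is the nuclear norm and ‖·‖_F the Frobenius norm. -/
open Matrix
open scoped ComplexOrder

/-- Frobenius norm of a complex matrix. -/
noncomputable def frobNorm {N : ℕ} (A : Matrix (Fin N) (Fin N) ℂ) : ℝ :=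
  Real.sqrt (Matrix.trace (Aᴴ * A)).re

/-- Nuclear norm of a complex square matrix: the trace of `√(AᴴA)`. -/
noncomputable def nuclearNorm {N : ℕ} (A : Matrix (Fin N) (Fin N) ℂ) : ℝ :=
  (Matrix.trace
    (((Matrix.posSemidef_conjTranspose_mul_self A).1.eigenvectorUnitary : Matrix (Fin N) (Fin N) ℂ) *
      Matrix.diagonal (((↑) : ℝ → ℂ) ∘ Real.sqrt ∘
        (Matrix.posSemidef_conjTranspose_mul_self A).1.eigenvalues) *
      (star (Matrix.posSemidef_conjTranspose_mul_self A).1.eigenvectorUnitary :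
        Matrix (Fin N) (Fin N) ℂ))).re

/-!
Write `sᵢ = max (σᵢ - τ) 0`, so that `X - Z = U diag(σᵢ - sᵢ) Vᴴ` with `0 ≤ σᵢ - sᵢ ≤ τ`, and
`σᵢ - sᵢ = τ` wherever `sᵢ ≠ 0`. The trace duality `Re tr(Bᴴ A) ≤ ‖B‖_op ‖A‖_*` (evaluate the trace
in an orthonormal eigenbasis `wᵢ` of `AᴴA`, where `‖A wᵢ‖ = √λᵢ`, and apply Cauchy–Schwarz
termwise) gives `Re⟪X - Z, Z'⟫ ≤ τ ‖Z'‖_*`, while `Re⟪X - Z, Z⟫ = Σ (σᵢ - sᵢ) sᵢ = τ ‖Z‖_*`.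
So `X - Z` is a subgradient of `τ ‖·‖_*` at `Z`, and expanding
`‖X - Z'‖_F² = ‖X - Z‖_F² - 2 Re⟪X - Z, Z' - Z⟫ + ‖Z' - Z‖_F²` shows that the objective at `Z'`
exceeds the one at `Z` by at least `‖Z' - Z‖_F² / 2`.
-/

open scoped MatrixOrder Matrix.Norms.L2Operator InnerProductSpace

namespace Matrix

variable {n : Type*} [Fintype n] [DecidableEq n]

section Unitary

variable {R : Type*} [CommRing R] [StarRing R]

lemma trace_mul_mul_conjTranspose_of_mem_unitaryGroup {U : Matrix n n R}
    (hU : U ∈ unitaryGroup n R) (M : Matrix n n R) : trace (U * M * Uᴴ) = trace M := by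
  rw [trace_mul_cycle, ← star_eq_conjTranspose, Unitary.star_mul_self_of_mem hU, one_mul]

lemma mul_diagonal_mul_conjTranspose_mul_of_mem_unitaryGroup {U V W : Matrix n n R}
    (hV : V ∈ unitaryGroup n R) (a b : n → R) :
    (U * diagonal a * Vᴴ) * (V * diagonal b * Wᴴ) = U * diagonal (a * b) * Wᴴ := by
  calc (U * diagonal a * Vᴴ) * (V * diagonal b * Wᴴ)
      = U * diagonal a * (star V * V) * diagonal b * Wᴴ := by simp only [Matrix.mul_assoc]; rfl
    _ = U * diagonal (a * b) * Wᴴ := by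
      rw [Unitary.star_mul_self_of_mem hV, Matrix.mul_one, Matrix.mul_assoc U,
        diagonal_mul_diagonal]
      rfl

lemma conjTranspose_mul_diagonal_mul_conjTranspose (U V : Matrix n n R) (a : n → R) :
    (U * diagonal a * Vᴴ)ᴴ = V * diagonal (star a) * Uᴴ := by
  simp [conjTranspose_mul, Matrix.mul_assoc]

end Unitary

lemma abs_mul_diagonal_mul_conjTranspose {U V : Matrix n n ℂ} (hU : U ∈ unitaryGroup n ℂ)
    (hV : V ∈ unitaryGroup n ℂ) {s : n → ℝ} (hs : 0 ≤ s) :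
    CFC.abs (U * diagonal (fun i => (s i : ℂ)) * Vᴴ) = V * diagonal (fun i => (s i : ℂ)) * Vᴴ := by
  have hD : (diagonal (fun i => (s i : ℂ))).PosSemidef :=
    .diagonal fun i => Complex.zero_le_real.mpr (hs i)
  refine CFC.sqrt_unique ?_ (nonneg_iff_posSemidef.mpr (hD.mul_mul_conjTranspose_same V))
  have hs' : star (fun i => (s i : ℂ)) = fun i => (s i : ℂ) := by ext; simp
  rw [star_eq_conjTranspose, conjTranspose_mul_diagonal_mul_conjTranspose, hs',
    mul_diagonal_mul_conjTranspose_mul_of_mem_unitaryGroup hV,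
    mul_diagonal_mul_conjTranspose_mul_of_mem_unitaryGroup hU]

variable {𝕜 : Type*} [RCLike 𝕜]

lemma l2_opNorm_mul_diagonal_mul_conjTranspose {U V : Matrix n n 𝕜}
    (hU : U ∈ unitaryGroup n 𝕜) (hV : V ∈ unitaryGroup n 𝕜) (a : n → 𝕜) :
    ‖U * diagonal a * Vᴴ‖ = ‖a‖ := by
  rw [← star_eq_conjTranspose, CStarRing.norm_mul_mem_unitary _ (Unitary.star_mem hV),
    CStarRing.norm_mem_unitary_mul _ hU, l2_opNorm_diagonal]

lemma trace_eq_sum_inner_toEuclideanCLM (M : Matrix n n 𝕜)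
    (b : OrthonormalBasis n 𝕜 (EuclideanSpace 𝕜 n)) :
    trace M = ∑ i, ⟪b i, toEuclideanCLM (𝕜 := 𝕜) M (b i)⟫_𝕜 := by
  rw [← trace_toLin_eq M (PiLp.basisFun 2 𝕜 n), LinearMap.trace_eq_sum_inner _ b]
  rfl

lemma inner_toEuclideanCLM_conjTranspose_mul (B A : Matrix n n 𝕜) (x : EuclideanSpace 𝕜 n) :
    ⟪x, toEuclideanCLM (𝕜 := 𝕜) (Bᴴ * A) x⟫_𝕜 =
      ⟪toEuclideanCLM (𝕜 := 𝕜) B x, toEuclideanCLM (𝕜 := 𝕜) A x⟫_𝕜 := by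
  rw [map_mul, ← star_eq_conjTranspose, map_star, ContinuousLinearMap.star_eq_adjoint,
    ContinuousLinearMap.mul_def, ContinuousLinearMap.comp_apply,
    ContinuousLinearMap.adjoint_inner_right]

lemma norm_toEuclideanCLM_eigenvectorBasis (A : Matrix n n 𝕜) (hA : (Aᴴ * A).IsHermitian)
    (i : n) : ‖toEuclideanCLM (𝕜 := 𝕜) A (hA.eigenvectorBasis i)‖ = √(hA.eigenvalues i) := by
  have heig : toEuclideanCLM (𝕜 := 𝕜) (Aᴴ * A) (hA.eigenvectorBasis i) =
      hA.eigenvalues i • hA.eigenvectorBasis i := by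
    ext1
    rw [ofLp_toEuclideanCLM, hA.mulVec_eigenvectorBasis, WithLp.ofLp_smul]
  rw [← Real.sqrt_sq (norm_nonneg _), @norm_sq_eq_re_inner 𝕜,
    ← inner_toEuclideanCLM_conjTranspose_mul, heig, inner_smul_right_eq_smul,
    inner_self_eq_norm_sq_to_K, hA.eigenvectorBasis.orthonormal.1 i]
  simp [RCLike.smul_re]

end Matrix

section NuclearNorm

variable {N : ℕ}

lemma nuclearNorm_eq_sum_sqrt_eigenvalues (A : Matrix (Fin N) (Fin N) ℂ) :
    nuclearNorm A = ∑ i, √((posSemidef_conjTranspose_mul_self A).1.eigenvalues i) := by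
  rw [nuclearNorm, star_eq_conjTranspose,
    trace_mul_mul_conjTranspose_of_mem_unitaryGroup (SetLike.coe_mem _), trace_diagonal,
    Complex.re_sum]
  simp

lemma nuclearNorm_nonneg (A : Matrix (Fin N) (Fin N) ℂ) : 0 ≤ nuclearNorm A := by
  rw [nuclearNorm_eq_sum_sqrt_eigenvalues]
  exact Finset.sum_nonneg fun i _ => Real.sqrt_nonneg _

lemma nuclearNorm_eq_re_trace_abs (A : Matrix (Fin N) (Fin N) ℂ) :
    nuclearNorm A = (trace (CFC.abs A)).re := by
  have hA := posSemidef_conjTranspose_mul_self A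
  rw [CFC.abs, star_eq_conjTranspose, CFC.sqrt_eq_real_sqrt _ hA.nonneg, cfcₙ_eq_cfc,
    hA.1.cfc_eq, IsHermitian.cfc, Unitary.conjStarAlgAut_apply]
  rfl

lemma nuclearNorm_mul_diagonal_mul_conjTranspose {U V : Matrix (Fin N) (Fin N) ℂ}
    (hU : U ∈ unitaryGroup (Fin N) ℂ) (hV : V ∈ unitaryGroup (Fin N) ℂ) {s : Fin N → ℝ}
    (hs : 0 ≤ s) : nuclearNorm (U * diagonal (fun i => (s i : ℂ)) * Vᴴ) = ∑ i, s i := by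
  rw [nuclearNorm_eq_re_trace_abs, abs_mul_diagonal_mul_conjTranspose hU hV hs,
    trace_mul_mul_conjTranspose_of_mem_unitaryGroup hV, trace_diagonal, Complex.re_sum]
  simp

lemma re_trace_conjTranspose_mul_le (B A : Matrix (Fin N) (Fin N) ℂ) :
    (trace (Bᴴ * A)).re ≤ ‖B‖ * nuclearNorm A := by
  set hA := (posSemidef_conjTranspose_mul_self A).1
  set w := hA.eigenvectorBasis
  rw [trace_eq_sum_inner_toEuclideanCLM _ w, Complex.re_sum, nuclearNorm_eq_sum_sqrt_eigenvalues,
    Finset.mul_sum]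
  gcongr with i
  calc (⟪w i, toEuclideanCLM (𝕜 := ℂ) (Bᴴ * A) (w i)⟫_ℂ).re
      = (⟪toEuclideanCLM (𝕜 := ℂ) B (w i), toEuclideanCLM (𝕜 := ℂ) A (w i)⟫_ℂ).re := by
        rw [inner_toEuclideanCLM_conjTranspose_mul]
    _ ≤ ‖toEuclideanCLM (𝕜 := ℂ) B (w i)‖ * ‖toEuclideanCLM (𝕜 := ℂ) A (w i)‖ :=
        re_inner_le_norm (𝕜 := ℂ) _ _
    _ ≤ ‖B‖ * √(hA.eigenvalues i) := by
        rw [norm_toEuclideanCLM_eigenvectorBasis]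
        gcongr
        calc ‖toEuclideanCLM (𝕜 := ℂ) B (w i)‖ ≤ ‖toEuclideanCLM (𝕜 := ℂ) B‖ * ‖w i‖ :=
              (toEuclideanCLM (𝕜 := ℂ) B).le_opNorm (w i)
          _ = ‖B‖ := by rw [w.orthonormal.1 i, mul_one, l2_opNorm_toEuclideanCLM]

lemma mul_nuclearNorm_add_re_trace_le {U V : Matrix (Fin N) (Fin N) ℂ}
    (hU : U ∈ unitaryGroup (Fin N) ℂ) (hV : V ∈ unitaryGroup (Fin N) ℂ) {s m : Fin N → ℝ}
    (hs : 0 ≤ s) {τ : ℝ} (hτ : 0 ≤ τ) (hm : ∀ i, |m i| ≤ τ) (hms : ∀ i, m i * s i = τ * s i)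
    (Z' : Matrix (Fin N) (Fin N) ℂ) :
    τ * nuclearNorm (U * diagonal (fun i => (s i : ℂ)) * Vᴴ) +
        (trace ((U * diagonal (fun i => (m i : ℂ)) * Vᴴ)ᴴ *
          (Z' - U * diagonal (fun i => (s i : ℂ)) * Vᴴ))).re ≤ τ * nuclearNorm Z' := by
  have hnorm : ‖U * diagonal (fun i => (m i : ℂ)) * Vᴴ‖ ≤ τ := by
    rw [l2_opNorm_mul_diagonal_mul_conjTranspose hU hV]
    refine (pi_norm_le_iff_of_nonneg hτ).mpr fun i => ?_
    rw [Complex.norm_real, Real.norm_eq_abs]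
    exact hm i
  have hZ' := (re_trace_conjTranspose_mul_le (U * diagonal (fun i => (m i : ℂ)) * Vᴴ) Z').trans
    (mul_le_mul_of_nonneg_right hnorm (nuclearNorm_nonneg Z'))
  have hZ : (trace ((U * diagonal (fun i => (m i : ℂ)) * Vᴴ)ᴴ *
      (U * diagonal (fun i => (s i : ℂ)) * Vᴴ))).re = τ * ∑ i, s i := by
    rw [conjTranspose_mul_diagonal_mul_conjTranspose,
      mul_diagonal_mul_conjTranspose_mul_of_mem_unitaryGroup hU,
      trace_mul_mul_conjTranspose_of_mem_unitaryGroup hV, trace_diagonal, Complex.re_sum,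
      Finset.mul_sum]
    refine Finset.sum_congr rfl fun i _ => ?_
    simp [hms i]
  rw [Matrix.mul_sub, trace_sub, Complex.sub_re, hZ,
    nuclearNorm_mul_diagonal_mul_conjTranspose hU hV hs]
  linarith

end NuclearNorm

section Frobenius

variable {N : ℕ}

lemma frobNorm_sq (A : Matrix (Fin N) (Fin N) ℂ) : frobNorm A ^ 2 = (trace (Aᴴ * A)).re :=
  Real.sq_sqrt (Complex.le_def.mp (posSemidef_conjTranspose_mul_self A).trace_nonneg).1

lemma frobNorm_eq_zero {A : Matrix (Fin N) (Fin N) ℂ} (h : frobNorm A = 0) : A = 0 := by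
  have hnonneg := (posSemidef_conjTranspose_mul_self A).trace_nonneg
  have hre : (trace (Aᴴ * A)).re ≤ 0 := by
    rw [← frobNorm_sq, h]
    norm_num
  refine trace_conjTranspose_mul_self_eq_zero_iff.mp (le_antisymm ?_ hnonneg)
  exact Complex.le_def.mpr ⟨hre, (Complex.le_def.mp hnonneg).2.symm⟩

lemma frobNorm_sub_sq (A B : Matrix (Fin N) (Fin N) ℂ) :
    frobNorm (A - B) ^ 2 = frobNorm A ^ 2 - 2 * (trace (Aᴴ * B)).re + frobNorm B ^ 2 := by
  have hBA : (trace (Bᴴ * A)).re = (trace (Aᴴ * B)).re := by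
    rw [← conjTranspose_conjTranspose A, ← conjTranspose_mul, trace_conjTranspose,
      conjTranspose_conjTranspose, Complex.star_def, Complex.conj_re]
  rw [frobNorm_sq, frobNorm_sq, frobNorm_sq, conjTranspose_sub, Matrix.sub_mul, Matrix.mul_sub,
    Matrix.mul_sub, trace_sub, trace_sub, trace_sub, Complex.sub_re, Complex.sub_re,
    Complex.sub_re, hBA]
  ring

lemma add_half_frobNorm_sq_le_of_subgradient {g : Matrix (Fin N) (Fin N) ℂ → ℝ}
    {X Z Z' : Matrix (Fin N) (Fin N) ℂ} (h : g Z + (trace ((X - Z)ᴴ * (Z' - Z))).re ≤ g Z') :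
    g Z + (1 / 2) * frobNorm (X - Z) ^ 2 + (1 / 2) * frobNorm (Z' - Z) ^ 2 ≤
      g Z' + (1 / 2) * frobNorm (X - Z') ^ 2 := by
  have hexpand := frobNorm_sub_sq (X - Z) (Z' - Z)
  rw [sub_sub_sub_cancel_right] at hexpand
  linarith

end Frobenius

/-- Singular value shrinkage: if `X = U Σ Vᴴ` is an SVD of `X` with
`Σ = diag(σ₁,…,σ_N)` and `τ ≥ 0`, then `Z = U D_τ(Σ) Vᴴ` with
`D_τ(Σ) = diag(max(σᵢ − τ, 0))` is the unique minimizer of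
`Z' ↦ τ‖Z'‖_* + (1/2)‖X − Z'‖_F²`. -/
theorem singular_value_shrinkage_prox {N : ℕ}
    (U V : Matrix (Fin N) (Fin N) ℂ)
    (hU : U ∈ Matrix.unitaryGroup (Fin N) ℂ)
    (hV : V ∈ Matrix.unitaryGroup (Fin N) ℂ)
    (σ : Fin N → ℝ) (hσ : ∀ i, 0 ≤ σ i)
    (X : Matrix (Fin N) (Fin N) ℂ)
    (hX : X = U * Matrix.diagonal (fun i => (σ i : ℂ)) * Vᴴ)
    (τ : ℝ) (hτ : 0 ≤ τ)
    (Z : Matrix (Fin N) (Fin N) ℂ)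
    (hZ : Z = U * Matrix.diagonal (fun i => (max (σ i - τ) 0 : ℝ) : Fin N → ℂ) * Vᴴ) :
    (∀ Z' : Matrix (Fin N) (Fin N) ℂ,
        τ * nuclearNorm Z + (1 / 2) * frobNorm (X - Z) ^ 2 ≤
          τ * nuclearNorm Z' + (1 / 2) * frobNorm (X - Z') ^ 2) ∧
    (∀ Z' : Matrix (Fin N) (Fin N) ℂ,
        τ * nuclearNorm Z' + (1 / 2) * frobNorm (X - Z') ^ 2 =
          τ * nuclearNorm Z + (1 / 2) * frobNorm (X - Z) ^ 2 → Z' = Z) := by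
  set s : Fin N → ℝ := fun i => max (σ i - τ) 0
  have hXZ : X - Z = U * diagonal (fun i => ((σ i - s i : ℝ) : ℂ)) * Vᴴ := by
    rw [hX, hZ, ← Matrix.sub_mul, ← Matrix.mul_sub, diagonal_sub]
    simp_rw [Complex.ofReal_sub]
    rfl
  have hshrink (i : Fin N) : |σ i - s i| ≤ τ ∧ (σ i - s i) * s i = τ * s i := by
    rcases le_total (σ i) τ with h | h
    · simp [s, abs_of_nonneg (hσ i), h]
    · simp [s, max_eq_left (sub_nonneg.mpr h), abs_of_nonneg hτ]
  have hgrowth (Z' : Matrix (Fin N) (Fin N) ℂ) := add_half_frobNorm_sq_le_of_subgradient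
      (g := fun A => τ * nuclearNorm A) (X := X) (Z' := Z') <| by
    rw [hXZ, hZ]
    exact mul_nuclearNorm_add_re_trace_le hU hV (s := s) (fun i => le_max_right _ _) hτ
      (fun i => (hshrink i).1) (fun i => (hshrink i).2) Z'
  refine ⟨fun Z' => ?_, fun Z' hZ' => ?_⟩
  · linarith [hgrowth Z', sq_nonneg (frobNorm (Z' - Z))]
  · have hsq : frobNorm (Z' - Z) ^ 2 = 0 := by
      linarith [hgrowth Z', sq_nonneg (frobNorm (Z' - Z))]
    exact sub_eq_zero.mp (frobNorm_eq_zero (pow_eq_zero_iff two_ne_zero |>.mp hsq))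
end

section
/- Let D¹,…,D^N be pairwise orthogonal nonzero vectors in a real Hilbert space and p₁,…,p_N real numbers. The projection of X onto the intersection P = ⋂ᵢ {Y : ⟨Dⁱ,Y⟩ ≤ pᵢ} of the corresponding half-spaces is given by P_P(X) = X + ∑_{i : ⟨X,Dⁱ⟩ > pᵢ} ((pᵢ − ⟨X,Dⁱ⟩)/‖Dⁱ‖²) Dⁱ; that is, the projection onto the intersection equals the sum of the individual half-space corrections. -/
/-!
Write `q = X + ∑ cᵢ Dⁱ`, where `cᵢ ≤ 0` is the step that moves `X` onto the boundary of the
`i`-th half-space when `X` violates it and `cᵢ = 0` otherwise. By orthogonality the `j`-th step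
does not affect the other constraints, so `⟨Dʲ, q⟩ = min pⱼ ⟨Dʲ, X⟩` and `q` is feasible.
Moreover `X - q = -∑ cᵢ Dⁱ` satisfies the variational inequality `⟨X - q, q - Y⟩ ≥ 0` for every
feasible `Y`: each nonzero `cᵢ` belongs to an active constraint `⟨Dⁱ, q⟩ = pᵢ ≥ ⟨Dⁱ, Y⟩`.
-/

open Finset RealInnerProductSpace

section

variable {H : Type*} [NormedAddCommGroup H] [InnerProductSpace ℝ H]

theorem norm_sub_le_norm_sub_of_inner_nonneg {x q y : H} (h : 0 ≤ ⟪x - q, q - y⟫) :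
    ‖x - q‖ ≤ ‖x - y‖ := by
  have hsq : ‖x - q‖ ^ 2 ≤ ‖x - y‖ ^ 2 := by
    rw [show x - y = (x - q) + (q - y) by abel, norm_add_sq_real]
    nlinarith [sq_nonneg ‖q - y‖]
  exact (pow_le_pow_iff_left₀ (norm_nonneg _) (norm_nonneg _) two_ne_zero).mp hsq

theorem inner_sum_smul_of_pairwise_inner_eq_zero {ι : Type*} [Fintype ι] {v : ι → H}
    (hv : Pairwise fun i j => ⟪v i, v j⟫ = 0) (t : ι → ℝ) (j : ι) :
    ⟪v j, ∑ i, t i • v i⟫ = t j * ‖v j‖ ^ 2 := by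
  rw [inner_sum, sum_eq_single j]
  · rw [real_inner_smul_right, real_inner_self_eq_norm_sq]
  · intro i _ hij
    rw [real_inner_smul_right, hv hij.symm, mul_zero]
  · simp

noncomputable def halfspaceStep (d : H) (c : ℝ) (x : H) : ℝ :=
  if c < ⟪x, d⟫ then (c - ⟪x, d⟫) / ‖d‖ ^ 2 else 0

theorem inner_add_halfspaceStep_mul {d : H} (hd : d ≠ 0) (c : ℝ) (x : H) :
    ⟪d, x⟫ + halfspaceStep d c x * ‖d‖ ^ 2 = min c ⟪d, x⟫ := by
  rw [halfspaceStep, real_inner_comm x d]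
  split_ifs with h
  · have : ‖d‖ ^ 2 ≠ 0 := by positivity
    rw [div_mul_cancel₀ _ this, min_eq_left h.le]
    ring
  · rw [zero_mul, add_zero, min_eq_right (not_lt.mp h)]

theorem halfspaceStep_mul_nonpos {d : H} {c : ℝ} {x y : H} (hy : ⟪d, y⟫ ≤ c) :
    halfspaceStep d c x * (min c ⟪d, x⟫ - ⟪d, y⟫) ≤ 0 := by
  rw [halfspaceStep, real_inner_comm x d]
  split_ifs with h
  · rw [min_eq_left h.le]
    exact mul_nonpos_of_nonpos_of_nonneg
      (div_nonpos_of_nonpos_of_nonneg (by linarith) (by positivity)) (by linarith)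
  · rw [zero_mul]

end

/-- Projection onto an intersection of half-spaces with mutually orthogonal normal
vectors: the projection of `X` equals `X` plus the sum of the individual half-space
corrections over the violated constraints. -/
theorem projection_onto_orthogonal_halfspaces
    {H : Type*} [NormedAddCommGroup H] [InnerProductSpace ℝ H]
    (N : ℕ) (D : Fin N → H) (hD0 : ∀ i, D i ≠ 0)
    (horth : ∀ i j, i ≠ j → inner ℝ (D i) (D j) = (0 : ℝ))
    (p : Fin N → ℝ)
    (X q : H)
    (hq : q = X + ∑ i : Fin N,
      if p i < inner ℝ X (D i) then
        (((p i - inner ℝ X (D i)) / ‖D i‖ ^ 2) : ℝ) • D i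
      else 0) :
    (∀ i, inner ℝ (D i) q ≤ p i) ∧
    ∀ Y : H, (∀ i, inner ℝ (D i) Y ≤ p i) → ‖X - q‖ ≤ ‖X - Y‖ := by
  set c : Fin N → ℝ := fun i => halfspaceStep (D i) (p i) X
  have hq' : q = X + ∑ i, c i • D i := by
    simp only [hq, c, halfspaceStep, ite_smul, zero_smul]
  have hinner : ∀ j, ⟪D j, q⟫ = min (p j) ⟪D j, X⟫ := fun j => by
    rw [hq', inner_add_right, inner_sum_smul_of_pairwise_inner_eq_zero horth,
      inner_add_halfspaceStep_mul (hD0 j)]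
  refine ⟨fun j => hinner j ▸ min_le_left _ _, fun Y hY => ?_⟩
  apply norm_sub_le_norm_sub_of_inner_nonneg
  have hXq : X - q = -∑ i, c i • D i := by rw [hq']; abel
  rw [hXq, inner_neg_left, sum_inner, neg_nonneg]
  refine sum_nonpos fun i _ => ?_
  rw [real_inner_smul_left, inner_sub_right, hinner i]
  exact halfspaceStep_mul_nonpos (hY i)
end

section
/- Let T be a nonexpansive self-map of a real Hilbert space with Fix(T) ≠ ∅, let (βₙ) be a summable sequence in [0,1], and let (Yₙ) be a sequence with ‖Yₙ‖ ≤ ‖Xₙ‖ for all n, where X_{n+1} = T(Xₙ + βₙYₙ). Then the sequence (Yₙ) is bounded. -/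
/-!
Fix `z = T z`. Nonexpansiveness gives `‖X (n+1) - z‖ ≤ ‖Xₙ - z‖ + βₙ ‖Yₙ‖`, and
`‖Yₙ‖ ≤ ‖Xₙ‖ ≤ ‖Xₙ - z‖ + ‖z‖`, so `bₙ := ‖Xₙ - z‖ + ‖z‖` satisfies `b (n+1) ≤ (1 + βₙ) bₙ`.
Since `1 + t ≤ exp t`, this gives `bₙ ≤ b₀ exp (∑ βₖ)`, which is finite because `β` is summable.
-/

open Finset Real

lemma le_mul_exp_sum_of_le_one_add_mul {b β : ℕ → ℝ} (hb : ∀ n, 0 ≤ b n)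
    (hstep : ∀ n, b (n + 1) ≤ (1 + β n) * b n) (n : ℕ) :
    b n ≤ b 0 * exp (∑ k ∈ range n, β k) := by
  induction n with
  | zero => simp
  | succ n ih =>
    calc b (n + 1) ≤ (1 + β n) * b n := hstep n
      _ ≤ exp (β n) * (b 0 * exp (∑ k ∈ range n, β k)) := by
        gcongr
        · exact hb n
        · linarith [add_one_le_exp (β n)]
      _ = b 0 * exp (∑ k ∈ range (n + 1), β k) := by
        rw [sum_range_succ, exp_add]; ring

lemma exists_forall_le_of_le_one_add_mul {b β : ℕ → ℝ} (hb : ∀ n, 0 ≤ b n)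
    (hstep : ∀ n, b (n + 1) ≤ (1 + β n) * b n) (hβ : ∀ n, 0 ≤ β n) (hβs : Summable β) :
    ∃ R, ∀ n, b n ≤ R :=
  ⟨b 0 * exp (∑' k, β k), fun n => (le_mul_exp_sum_of_le_one_add_mul hb hstep n).trans <| by
    gcongr
    · exact hb 0
    · exact hβs.sum_le_tsum _ fun k _ => hβ k⟩

lemma norm_apply_add_smul_sub_add_norm_le {E : Type*} [SeminormedAddCommGroup E]
    [NormedSpace ℝ E] {T : E → E} (hT : ∀ x y, ‖T x - T y‖ ≤ ‖x - y‖) {z : E} (hz : T z = z)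
    {x y : E} (hy : ‖y‖ ≤ ‖x‖) {c : ℝ} (hc : 0 ≤ c) :
    ‖T (x + c • y) - z‖ + ‖z‖ ≤ (1 + c) * (‖x - z‖ + ‖z‖) := by
  have hy' : ‖y‖ ≤ ‖x - z‖ + ‖z‖ := hy.trans (norm_le_norm_sub_add x z)
  calc ‖T (x + c • y) - z‖ + ‖z‖ = ‖T (x + c • y) - T z‖ + ‖z‖ := by rw [hz]
    _ ≤ ‖(x - z) + c • y‖ + ‖z‖ := by gcongr; exact (hT _ _).trans_eq (by congr 1; abel)
    _ ≤ ‖x - z‖ + c * ‖y‖ + ‖z‖ := by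
        gcongr
        exact (norm_add_le _ _).trans_eq (by rw [norm_smul, norm_of_nonneg hc])
    _ ≤ (1 + c) * (‖x - z‖ + ‖z‖) := by nlinarith

/-- If `T` is a nonexpansive self-map of a real Hilbert space with a fixed point,
`(βₙ)` is a summable sequence in `[0,1]`, and `X_{n+1} = T(Xₙ + βₙYₙ)` with
`‖Yₙ‖ ≤ ‖Xₙ‖` for all `n`, then the sequence `(Yₙ)` is bounded. -/
theorem perturbations_bounded
    {H : Type*} [NormedAddCommGroup H] [InnerProductSpace ℝ H]
    (T : H → H) (hT : ∀ x y, ‖T x - T y‖ ≤ ‖x - y‖)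
    (hFix : ∃ z, T z = z)
    (β : ℕ → ℝ) (hβ : ∀ n, β n ∈ Set.Icc (0 : ℝ) 1) (hβs : Summable β)
    (X Y : ℕ → H)
    (hXY : ∀ n, ‖Y n‖ ≤ ‖X n‖)
    (hrec : ∀ n, X (n + 1) = T (X n + β n • Y n)) :
    ∃ R : ℝ, ∀ n, ‖Y n‖ ≤ R := by
  obtain ⟨z, hz⟩ := hFix
  obtain ⟨R, hR⟩ := exists_forall_le_of_le_one_add_mul (b := fun n => ‖X n - z‖ + ‖z‖)
    (fun n => by positivity)
    (fun n => by
      simpa only [hrec n] using norm_apply_add_smul_sub_add_norm_le hT hz (hXY n) (hβ n).1)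
    (fun n => (hβ n).1) hβs
  exact ⟨R, fun n => (hXY n).trans ((norm_le_norm_sub_add (X n) z).trans (hR n))⟩
end

section
/- Let T be an α-averaged nonexpansive self-map of a finite-dimensional real Hilbert space with Fix(T) ≠ ∅, and let (βₙYₙ) be bounded perturbations (i.e., ∑βₙ < ∞ with βₙ ≥ 0 and (Yₙ) bounded). Then for any X₀, the sequence X_{n+1} = T(Xₙ + βₙYₙ) converges to a point in Fix(T). -/
open Filter Topology

/-- Quasi-Fejér monotone sequences converge. -/
lemma quasiFejer_aux (a e : ℕ → ℝ) (ha : ∀ n, 0 ≤ a n) (he : ∀ n, 0 ≤ e n)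
    (hes : Summable e) (hrec : ∀ n, a (n + 1) ≤ a n + e n) :
    ∃ L, Tendsto a atTop (𝓝 L) := by
  set t : ℕ → ℝ := fun n => ∑' k, e (k + n) with ht
  have htail : ∀ n, t n = e n + t (n + 1) := by
    intro n
    have hsum : Summable fun k => e (k + n) := (summable_nat_add_iff n).2 hes
    rw [ht]
    simp only []
    rw [Summable.tsum_eq_zero_add hsum]
    congr 1
    · simp
    · apply tsum_congr
      intro k
      congr 1
      omega
  have hb_anti : Antitone (fun n => a n + t n) := by
    apply antitone_nat_of_succ_le
    intro n
    have h1 := hrec n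
    have h2 := htail n
    show a (n + 1) + t (n + 1) ≤ a n + t n
    linarith
  have hb_bdd : BddBelow (Set.range fun n => a n + t n) := by
    refine ⟨0, ?_⟩
    rintro _ ⟨n, rfl⟩
    have h1 : 0 ≤ t n := tsum_nonneg fun k => he _
    have h2 := ha n
    show 0 ≤ a n + t n
    linarith
  have hbL : Tendsto (fun n => a n + t n) atTop (𝓝 (⨅ n, a n + t n)) :=
    tendsto_atTop_ciInf hb_anti hb_bdd
  have ht0 : Tendsto t atTop (𝓝 0) := tendsto_sum_nat_add e
  refine ⟨⨅ n, a n + t n, ?_⟩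
  have := hbL.sub ht0
  simpa using this

/-- Bounded perturbation resilience of averaged operators: if `T = (1−α)Id + αR` is an
`α`-averaged nonexpansive self-map of a finite-dimensional real Hilbert space with a
fixed point, `(βₙ) ⊂ ℝ₊` is summable, and `(Yₙ)` is bounded, then the iteration
`X_{n+1} = T(Xₙ + βₙYₙ)` converges to a fixed point of `T` for every `X₀`. -/
theorem bounded_perturbation_resilience
    {H : Type*} [NormedAddCommGroup H] [InnerProductSpace ℝ H]
    [FiniteDimensional ℝ H]
    (α : ℝ) (hα : α ∈ Set.Ioo (0 : ℝ) 1)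
    (R : H → H) (hR : ∀ x y, ‖R x - R y‖ ≤ ‖x - y‖)
    (T : H → H) (hT : ∀ x, T x = (1 - α) • x + α • R x)
    (hFix : ∃ z, T z = z)
    (β : ℕ → ℝ) (hβ : ∀ n, 0 ≤ β n) (hβs : Summable β)
    (Y : ℕ → H) (hY : ∃ C : ℝ, ∀ n, ‖Y n‖ ≤ C)
    (X : ℕ → H)
    (hrec : ∀ n, X (n + 1) = T (X n + β n • Y n)) :
    ∃ x : H, T x = x ∧ Tendsto X atTop (𝓝 x) := by
  obtain ⟨hα0, hα1⟩ := hα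
  obtain ⟨z, hz⟩ := hFix
  -- z is a fixed point of R
  have hRz : R z = z := by
    have h1 : (1 - α) • z + α • R z = z := by rw [← hT z, hz]
    have h2 : α • R z = α • z := by
      have h3 : α • R z = z - (1 - α) • z := eq_sub_of_add_eq' h1
      rw [h3, sub_smul, one_smul]
      abel
    exact smul_right_injective H (ne_of_gt hα0) h2
  -- T is nonexpansive
  have hTnonexp : ∀ x y, ‖T x - T y‖ ≤ ‖x - y‖ := by
    intro x y
    rw [hT x, hT y]
    have hrw : (1 - α) • x + α • R x - ((1 - α) • y + α • R y)
        = (1 - α) • (x - y) + α • (R x - R y) := by module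
    rw [hrw]
    calc ‖(1 - α) • (x - y) + α • (R x - R y)‖
        ≤ ‖(1 - α) • (x - y)‖ + ‖α • (R x - R y)‖ := norm_add_le _ _
      _ = (1 - α) * ‖x - y‖ + α * ‖R x - R y‖ := by
          rw [norm_smul, norm_smul, Real.norm_eq_abs, Real.norm_eq_abs,
            abs_of_nonneg (by linarith), abs_of_nonneg (le_of_lt hα0)]
      _ ≤ ‖x - y‖ := by nlinarith [hR x y, norm_nonneg (x - y)]
  -- averaged operator inequality
  have key : ∀ u : H, ‖T u - z‖ ^ 2 ≤ ‖u - z‖ ^ 2 - (α * (1 - α)) * ‖u - R u‖ ^ 2 := by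
    intro u
    have hRu : ‖R u - z‖ ≤ ‖u - z‖ := by
      have := hR u z; rwa [hRz] at this
    have hRusq : ‖R u - z‖ ^ 2 ≤ ‖u - z‖ ^ 2 :=
      pow_le_pow_left₀ (norm_nonneg _) hRu 2
    have hTu : T u - z = (u - z) - α • (u - R u) := by rw [hT u]; module
    have h2 : ‖R u - z‖ ^ 2
        = ‖u - z‖ ^ 2 - 2 * inner ℝ (u - z) (u - R u) + ‖u - R u‖ ^ 2 := by
      have hrw : R u - z = (u - z) - (u - R u) := by module
      rw [hrw, norm_sub_sq_real]
    rw [hTu, norm_sub_sq_real, real_inner_smul_right, norm_smul, Real.norm_eq_abs,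
      abs_of_nonneg (le_of_lt hα0)]
    nlinarith [sq_nonneg ‖u - R u‖]
  -- perturbation bounds
  obtain ⟨C0, hC0⟩ := hY
  set C := max C0 0 with hC
  have hCnn : (0 : ℝ) ≤ C := le_max_right _ _
  have hYC : ∀ n, ‖Y n‖ ≤ C := fun n => (hC0 n).trans (le_max_left _ _)
  set e : ℕ → ℝ := fun n => β n * C with he
  have he0 : ∀ n, 0 ≤ e n := fun n => mul_nonneg (hβ n) hCnn
  have hes : Summable e := hβs.mul_right C
  have hpert : ∀ n, ‖β n • Y n‖ ≤ e n := by
    intro n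
    rw [norm_smul, Real.norm_eq_abs, abs_of_nonneg (hβ n)]
    exact mul_le_mul_of_nonneg_left (hYC n) (hβ n)
  set u : ℕ → H := fun n => X n + β n • Y n with hu
  have hXu : ∀ n, X (n + 1) = T (u n) := hrec
  have hud : ∀ (n : ℕ) (w : H), ‖u n - w‖ ≤ ‖X n - w‖ + e n := by
    intro n w
    have hrw : u n - w = (X n - w) + β n • Y n := by rw [hu]; dsimp only; abel
    calc ‖u n - w‖ = ‖(X n - w) + β n • Y n‖ := by rw [hrw]
      _ ≤ ‖X n - w‖ + ‖β n • Y n‖ := norm_add_le _ _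
      _ ≤ ‖X n - w‖ + e n := by linarith [hpert n]
  -- Fejér monotonicity (up to errors) w.r.t. any fixed point
  have fejer : ∀ w : H, T w = w → ∀ n, ‖X (n + 1) - w‖ ≤ ‖X n - w‖ + e n := by
    intro w hw n
    rw [hXu n]
    calc ‖T (u n) - w‖ = ‖T (u n) - T w‖ := by rw [hw]
      _ ≤ ‖u n - w‖ := hTnonexp _ _
      _ ≤ ‖X n - w‖ + e n := hud n w
  set E := ∑' n, e n with hE
  have hEnn : 0 ≤ E := tsum_nonneg he0
  have hsum_le : ∀ n, ∑ k ∈ Finset.range n, e k ≤ E :=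
    fun n => Summable.sum_le_tsum _ (fun i _ => he0 i) hes
  have heE : ∀ n, e n ≤ E := fun n => Summable.le_tsum hes n (fun m _ => he0 m)
  have hbound : ∀ n, ‖X n - z‖ ≤ ‖X 0 - z‖ + E := by
    intro n
    have step : ∀ m, ‖X m - z‖ ≤ ‖X 0 - z‖ + ∑ k ∈ Finset.range m, e k := by
      intro m
      induction m with
      | zero => simp
      | succ m ih =>
        rw [Finset.sum_range_succ]
        have := fejer z hz m
        linarith
    linarith [step n, hsum_le n]
  set M := ‖X 0 - z‖ + E with hM
  have hMnn : 0 ≤ M := by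
    have := norm_nonneg (X 0 - z); rw [hM]; linarith
  set d : ℕ → ℝ := fun n => ‖u n - R (u n)‖ with hd
  have hd0' : ∀ n, 0 ≤ d n := fun n => norm_nonneg _
  -- per-step quantitative inequality
  have hstep2 : ∀ n, α * (1 - α) * (d n) ^ 2
      ≤ ‖X n - z‖ ^ 2 - ‖X (n + 1) - z‖ ^ 2 + e n * (2 * M + E) := by
    intro n
    have h1 := key (u n)
    rw [← hXu n] at h1
    have h2 : ‖u n - z‖ ≤ ‖X n - z‖ + e n := hud n z
    have h3 : ‖u n - z‖ ^ 2 ≤ (‖X n - z‖ + e n) ^ 2 :=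
      pow_le_pow_left₀ (norm_nonneg _) h2 2
    have h4 : ‖X n - z‖ ≤ M := hbound n
    have h5 : e n ≤ E := heE n
    nlinarith [he0 n, norm_nonneg (X n - z)]
  -- summability of d²
  have hsums : ∀ n, ∑ k ∈ Finset.range n, (α * (1 - α) * (d k) ^ 2)
      ≤ ‖X 0 - z‖ ^ 2 - ‖X n - z‖ ^ 2 + (∑ k ∈ Finset.range n, e k) * (2 * M + E) := by
    intro n
    induction n with
    | zero => simp
    | succ n ih =>
      rw [Finset.sum_range_succ, Finset.sum_range_succ]
      have := hstep2 n
      nlinarith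
  have hdsum : Summable (fun n => α * (1 - α) * (d n) ^ 2) := by
    apply summable_of_sum_range_le
      (c := M ^ 2 + E * (2 * M + E))
      (fun n => mul_nonneg (by nlinarith) (sq_nonneg _))
    intro n
    have h1 := hsums n
    have h2 := hsum_le n
    have h3 : ‖X 0 - z‖ ≤ M := by rw [hM]; linarith
    have h4 := norm_nonneg (X 0 - z)
    have h5 := sq_nonneg ‖X n - z‖
    nlinarith
  have hd2 : Summable (fun n => (d n) ^ 2) := by
    have hne : α * (1 - α) ≠ 0 := ne_of_gt (by nlinarith)
    have h := hdsum.mul_left (α * (1 - α))⁻¹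
    simp only [inv_mul_cancel_left₀ hne] at h
    exact h
  have hdlim : Tendsto d atTop (𝓝 0) := by
    have h := hd2.tendsto_atTop_zero
    have h2 : Tendsto (fun n => Real.sqrt ((d n) ^ 2)) atTop (𝓝 (Real.sqrt 0)) :=
      (Real.continuous_sqrt.tendsto 0).comp h
    simpa [Real.sqrt_sq (hd0' _)] using h2
  have helim : Tendsto e atTop (𝓝 0) := hes.tendsto_atTop_zero
  -- Bolzano–Weierstrass
  have hXball : ∀ n, X n ∈ Metric.closedBall z M := by
    intro n
    simpa [Metric.mem_closedBall, dist_eq_norm] using hbound n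
  obtain ⟨x, -, φ, hφ, hconv⟩ :=
    tendsto_subseq_of_bounded Metric.isBounded_closedBall hXball
  -- the limit point is a fixed point
  have hpert0 : Tendsto (fun n => β (φ n) • Y (φ n)) atTop (𝓝 0) := by
    apply squeeze_zero_norm (fun n => hpert (φ n))
    exact helim.comp hφ.tendsto_atTop
  have huconv : Tendsto (fun n => u (φ n)) atTop (𝓝 x) := by
    have := Tendsto.add hconv hpert0
    simpa using this
  have hRlip : LipschitzWith 1 R := by
    apply LipschitzWith.of_dist_le_mul
    intro a b
    simpa [dist_eq_norm] using hR a b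
  have h1 : Tendsto (fun n => R (u (φ n))) atTop (𝓝 (R x)) :=
    (hRlip.continuous.tendsto x).comp huconv
  have h2 : Tendsto (fun n => u (φ n) - R (u (φ n))) atTop (𝓝 (x - R x)) :=
    huconv.sub h1
  have h3 : Tendsto (fun n => u (φ n) - R (u (φ n))) atTop (𝓝 0) := by
    exact squeeze_zero_norm (fun n => le_refl (d (φ n))) (hdlim.comp hφ.tendsto_atTop)
  have hRx : R x = x := by
    have := tendsto_nhds_unique h2 h3
    rw [sub_eq_zero] at this
    exact this.symm
  have hTx : T x = x := by rw [hT x, hRx]; module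
  -- full convergence via quasi-Fejér
  obtain ⟨L, hL⟩ := quasiFejer_aux (fun n => ‖X n - x‖) e (fun n => norm_nonneg _)
    he0 hes (fejer x hTx)
  have hsub : Tendsto (fun n => ‖X (φ n) - x‖) atTop (𝓝 L) :=
    hL.comp hφ.tendsto_atTop
  have hsub0 : Tendsto (fun n => ‖X (φ n) - x‖) atTop (𝓝 0) := by
    have := tendsto_iff_norm_sub_tendsto_zero.mp hconv
    simpa using this
  have hL0 : L = 0 := tendsto_nhds_unique hsub hsub0
  refine ⟨x, hTx, ?_⟩
  rw [tendsto_iff_norm_sub_tendsto_zero]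
  simpa [hL0] using hL
end
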